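/- Let S_L and S_U be nonempty finite sets (of labeled and unlabeled triples). Let φ₁ˡ, φ₀ˡ : S_L → ℝ and φ₁ᵘ, φ₀ᵘ : S_U → ℝ take values in (0, 1], let β, α ∈ (0,1), and let wˡ : S_L → [0,1] and wᵘ : S_U → [0,1]. Then (1/|S_L|) * ∑_{s ∈ S_L} Real.log (β * φ₁ˡ(s) + (1 - β) * φ₀ˡ(s)) + (1/|S_U|) * ∑_{s ∈ S_U} Real.log (α * φ₁ᵘ(s) + (1 - α) * φ₀ᵘ(s)) ≥ (1/|S_L|) * ∑_{s ∈ S_L} (wˡ(s) * Real.log φ₁ˡ(s) + (1 - wˡ(s)) * Real.log φ₀ˡ(s)) + (1/|S_U|) * ∑_{s ∈ S_U} (wᵘ(s) * Real.log φ₁ᵘ(s) + (1 - wᵘ(s)) * Real.log φ₀ᵘ(s)) − (1/|S_L|) * ∑_{s ∈ S_L} (wˡ(s) * Real.log (wˡ(s) / β) + (1 - wˡ(s)) * Real.log ((1 - wˡ(s)) / (1 - β))) − (1/|S_U|) * ∑_{s ∈ S_U} (wᵘ(s) * Real.log (wᵘ(s) / α) + (1 - wᵘ(s)) * Real.log ((1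 - wᵘ(s)) / (1 - α))) − (1/|S_L|) * ∑_{s ∈ S_L} wˡ(s) − (1/|S_U|) * ∑_{s ∈ S_U} wᵘ(s), with terms multiplied by 0 contributing 0 (Real.log 0 = 0 convention). -/
import Mathlib

-- key two-point Jensen lemma
lemma key_jensen (a b w : ℝ) (ha : 0 < a) (hb : 0 < b) (hw0 : 0 ≤ w) (hw1 : w ≤ 1) :
    w * Real.log a + (1 - w) * Real.log b
      ≤ w * Real.log w + (1 - w) * Real.log (1 - w) + Real.log (a + b) := by
  rcases eq_or_lt_of_le hw0 with h0 | h0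
  · simp [← h0]
    exact Real.log_le_log hb (by linarith)
  rcases eq_or_lt_of_le hw1 with h1 | h1
  · simp [h1]
    exact Real.log_le_log ha (by linarith)
  have hab : 0 < a + b := by linarith
  have hw1' : 0 < 1 - w := by linarith
  have hx : Real.log (a / (w * (a + b))) = Real.log a - Real.log w - Real.log (a + b) := by
    rw [Real.log_div ha.ne' (by positivity), Real.log_mul h0.ne' hab.ne']; ring
  have hy : Real.log (b / ((1 - w) * (a + b))) = Real.log b - Real.log (1 - w) - Real.log (a + b) := by
    rw [Real.log_div hb.ne' (by positivity), Real.log_mul hw1'.ne' hab.ne']; ring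
  have h1' := Real.log_le_sub_one_of_pos (show 0 < a / (w * (a + b)) by positivity)
  have h2' := Real.log_le_sub_one_of_pos (show 0 < b / ((1 - w) * (a + b)) by positivity)
  rw [hx] at h1'
  rw [hy] at h2'
  have e1 : w * (a / (w * (a + b)) - 1) = a / (a + b) - w := by field_simp
  have e2 : (1 - w) * (b / ((1 - w) * (a + b)) - 1) = b / (a + b) - (1 - w) := by field_simp
  have m1 := mul_le_mul_of_nonneg_left h1' h0.le
  have m2 := mul_le_mul_of_nonneg_left h2' hw1'.le
  rw [e1] at m1
  rw [e2] at m2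
  have e3 : a / (a + b) + b / (a + b) = 1 := by field_simp
  nlinarith [m1, m2]

-- pointwise lemma matching theorem summands
lemma pointwise (φ₁ φ₀ β w : ℝ) (hφ₁ : φ₁ ∈ Set.Ioc (0:ℝ) 1) (hφ₀ : φ₀ ∈ Set.Ioc (0:ℝ) 1)
    (hβ : β ∈ Set.Ioo (0:ℝ) 1) (hw : w ∈ Set.Icc (0:ℝ) 1) :
    w * Real.log φ₁ + (1 - w) * Real.log φ₀
      - (w * Real.log (w / β) + (1 - w) * Real.log ((1 - w) / (1 - β)))
      - w ≤ Real.log (β * φ₁ + (1 - β) * φ₀) := by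
  obtain ⟨hb0, hb1⟩ := hβ
  obtain ⟨hw0, hw1⟩ := hw
  have hwd : w * Real.log (w / β) = w * Real.log w - w * Real.log β := by
    rcases eq_or_lt_of_le hw0 with h | h
    · simp [← h]
    · rw [Real.log_div h.ne' hb0.ne']; ring
  have hwd' : (1 - w) * Real.log ((1 - w) / (1 - β))
      = (1 - w) * Real.log (1 - w) - (1 - w) * Real.log (1 - β) := by
    rcases eq_or_lt_of_le hw1 with h | h
    · simp [h]
    · rw [Real.log_div (by linarith : (1:ℝ) - w ≠ 0) (by linarith : (1:ℝ) - β ≠ 0)]; ring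
  have key := key_jensen (β * φ₁) ((1 - β) * φ₀) w
    (mul_pos hb0 hφ₁.1) (mul_pos (by linarith) hφ₀.1) hw0 hw1
  have la : Real.log (β * φ₁) = Real.log β + Real.log φ₁ :=
    Real.log_mul hb0.ne' hφ₁.1.ne'
  have lb : Real.log ((1 - β) * φ₀) = Real.log (1 - β) + Real.log φ₀ :=
    Real.log_mul (by linarith) hφ₀.1.ne'
  rw [la, lb] at key
  rw [hwd, hwd']
  nlinarith [key]
/-- Aggregate noisy Positive-Unlabeled evidence lower bound (Theorem 1 of the paper):
the average log marginal collection probability of labeled triples plus the average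
log marginal uncollection probability of unlabeled triples is bounded below by the
expected conditional log-probabilities minus the KL terms minus the ℓ1 regularizers. -/
theorem npu_evidence_lower_bound
    {SL SU : Type*} [Fintype SL] [Fintype SU] [Nonempty SL] [Nonempty SU]
    (φ₁l φ₀l : SL → ℝ) (φ₁u φ₀u : SU → ℝ)
    (β α : ℝ) (wl : SL → ℝ) (wu : SU → ℝ)
    (hφ₁l : ∀ s, φ₁l s ∈ Set.Ioc (0 : ℝ) 1) (hφ₀l : ∀ s, φ₀l s ∈ Set.Ioc (0 : ℝ) 1)
    (hφ₁u : ∀ s, φ₁u s ∈ Set.Ioc (0 : ℝ) 1) (hφ₀u : ∀ s, φ₀u s ∈ Set.Ioc (0 : ℝ) 1)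
    (hβ : β ∈ Set.Ioo (0 : ℝ) 1) (hα : α ∈ Set.Ioo (0 : ℝ) 1)
    (hwl : ∀ s, wl s ∈ Set.Icc (0 : ℝ) 1) (hwu : ∀ s, wu s ∈ Set.Icc (0 : ℝ) 1) :
    (1 / (Fintype.card SL : ℝ)) * ∑ s, Real.log (β * φ₁l s + (1 - β) * φ₀l s) +
      (1 / (Fintype.card SU : ℝ)) * ∑ s, Real.log (α * φ₁u s + (1 - α) * φ₀u s) ≥
    (1 / (Fintype.card SL : ℝ)) *
        ∑ s, (wl s * Real.log (φ₁l s) + (1 - wl s) * Real.log (φ₀l s)) +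
      (1 / (Fintype.card SU : ℝ)) *
        ∑ s, (wu s * Real.log (φ₁u s) + (1 - wu s) * Real.log (φ₀u s)) -
      (1 / (Fintype.card SL : ℝ)) *
        ∑ s, (wl s * Real.log (wl s / β) +
          (1 - wl s) * Real.log ((1 - wl s) / (1 - β))) -
      (1 / (Fintype.card SU : ℝ)) *
        ∑ s, (wu s * Real.log (wu s / α) +
          (1 - wu s) * Real.log ((1 - wu s) / (1 - α))) -
      (1 / (Fintype.card SL : ℝ)) * ∑ s, wl s -
      (1 / (Fintype.card SU : ℝ)) * ∑ s, wu s := by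
  have cL : (0:ℝ) ≤ 1 / (Fintype.card SL : ℝ) := by positivity
  have cU : (0:ℝ) ≤ 1 / (Fintype.card SU : ℝ) := by positivity
  have hL : (1 / (Fintype.card SL : ℝ)) *
      ∑ s, ((wl s * Real.log (φ₁l s) + (1 - wl s) * Real.log (φ₀l s))
        - (wl s * Real.log (wl s / β) + (1 - wl s) * Real.log ((1 - wl s) / (1 - β)))
        - wl s)
      ≤ (1 / (Fintype.card SL : ℝ)) * ∑ s, Real.log (β * φ₁l s + (1 - β) * φ₀l s) := by
    apply mul_le_mul_of_nonneg_left _ cL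
    exact Finset.sum_le_sum fun s _ =>
      pointwise (φ₁l s) (φ₀l s) β (wl s) (hφ₁l s) (hφ₀l s) hβ (hwl s)
  have hU : (1 / (Fintype.card SU : ℝ)) *
      ∑ s, ((wu s * Real.log (φ₁u s) + (1 - wu s) * Real.log (φ₀u s))
        - (wu s * Real.log (wu s / α) + (1 - wu s) * Real.log ((1 - wu s) / (1 - α)))
        - wu s)
      ≤ (1 / (Fintype.card SU : ℝ)) * ∑ s, Real.log (α * φ₁u s + (1 - α) * φ₀u s) := by
    apply mul_le_mul_of_nonneg_left _ cU
    exact Finset.sum_le_sum fun s _ =>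
      pointwise (φ₁u s) (φ₀u s) α (wu s) (hφ₁u s) (hφ₀u s) hα (hwu s)
  simp only [Finset.sum_sub_distrib, mul_sub] at hL hU
  linarith [hL, hU]
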